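/- arXiv:2208.07438 — 3 statements merged into one kernel-verified Lean document; each statement's English description precedes it below -/
import Mathlib

section
/- For any two convex bodies K, K' in R^d, the Euclidean distance between their Steiner points satisfies \|S(K) - S(K')\|_2 \le \sqrt{d} \cdot \delta_{Haus}(K, K'), where \delta_{Haus} is the Hausdorff distance. -/
open MeasureTheory

/-- The support function `h_K(θ) = max_{x ∈ K} ⟨x, θ⟩` of a set `K ⊆ ℝ^d`. -/
noncomputable def suppFn {d : ℕ} (K : Set (EuclideanSpace ℝ (Fin d)))
    (θ : EuclideanSpace ℝ (Fin d)) : ℝ :=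
  sSup ((fun x => (inner ℝ x θ : ℝ)) '' K)

/-- The normalized uniform (Haar) measure on the unit sphere of `ℝ^d`. -/
noncomputable def sphereMeasure (d : ℕ) : Measure (EuclideanSpace ℝ (Fin d)) :=
  (μH[(d : ℝ) - 1] (Metric.sphere (0 : EuclideanSpace ℝ (Fin d)) 1))⁻¹ •
    (μH[(d : ℝ) - 1] : Measure (EuclideanSpace ℝ (Fin d))).restrict
      (Metric.sphere (0 : EuclideanSpace ℝ (Fin d)) 1)

/-- The Steiner point `S(K) = d ∫_{S^{d-1}} θ h_K(θ) dσ(θ)`. -/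
noncomputable def steinerPoint {d : ℕ} (K : Set (EuclideanSpace ℝ (Fin d))) :
    EuclideanSpace ℝ (Fin d) :=
  (d : ℝ) • ∫ θ, suppFn K θ • θ ∂(sphereMeasure d)

/-!
Testing `v = S(K) - S(K')` against itself gives `‖v‖² = d ∫ (h_K - h_K')(θ) ⟨θ, v⟩ dσ`, and
`|h_K - h_K'| ≤ δ_Haus(K, K')` on the sphere. By Jensen, the square of this integral is at most
`δ² ∫ ⟨θ, v⟩² dσ`, and rotation invariance of `σ` together with `∑ᵢ ⟨θ, eᵢ⟩² = ‖θ‖² = 1` gives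
`d ∫ ⟨θ, v⟩² dσ = ‖v‖²`. Hence `‖v‖⁴ ≤ d δ² ‖v‖²`.
-/
open Metric Set
open scoped RealInnerProductSpace

theorem sq_integral_le_integral_sq {α : Type*} [MeasurableSpace α] {μ : Measure α}
    [IsProbabilityMeasure μ] {f : α → ℝ} (hf : Integrable f μ)
    (hf2 : Integrable (fun x => f x ^ 2) μ) : (∫ x, f x ∂μ) ^ 2 ≤ ∫ x, f x ^ 2 ∂μ :=
  (even_two.convexOn_pow (𝕜 := ℝ)).map_integral_le (continuous_pow 2).continuousOn isClosed_univ
    (ae_of_all _ fun _ => mem_univ _) hf hf2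

section SupportFunction

variable {d : ℕ} {K K' : Set (EuclideanSpace ℝ (Fin d))}

theorem inner_le_suppFn (hKc : IsCompact K) {x : EuclideanSpace ℝ (Fin d)} (hx : x ∈ K)
    (θ : EuclideanSpace ℝ (Fin d)) : ⟪x, θ⟫ ≤ suppFn K θ :=
  le_csSup ((hKc.image (continuous_id.inner continuous_const)).bddAbove) ⟨x, hx, rfl⟩

theorem exists_mem_suppFn_eq_inner (hKc : IsCompact K) (hK : K.Nonempty)
    (θ : EuclideanSpace ℝ (Fin d)) : ∃ x ∈ K, ⟪x, θ⟫ = suppFn K θ :=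
  (hKc.image (continuous_id.inner continuous_const)).sSup_mem (hK.image _)

theorem continuous_suppFn (hKc : IsCompact K) : Continuous (suppFn K) :=
  hKc.continuous_sSup (f := fun θ x => ⟪x, θ⟫) (continuous_snd.inner continuous_fst)

theorem suppFn_sub_suppFn_le (hKc : IsCompact K) (hK'c : IsCompact K') (hK : K.Nonempty)
    (hK' : K'.Nonempty) (θ : EuclideanSpace ℝ (Fin d)) :
    suppFn K θ - suppFn K' θ ≤ hausdorffDist K K' * ‖θ‖ := by
  obtain ⟨x, hx, hxθ⟩ := exists_mem_suppFn_eq_inner hKc hK θ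
  obtain ⟨y, hy, hxy⟩ := hK'c.exists_infDist_eq_dist hK' x
  have hdist : dist x y ≤ hausdorffDist K K' := hxy ▸ infDist_le_hausdorffDist_of_mem hx
    (hausdorffEDist_ne_top_of_nonempty_of_bounded hK hK' hKc.isBounded hK'c.isBounded)
  calc suppFn K θ - suppFn K' θ ≤ ⟪x, θ⟫ - ⟪y, θ⟫ := by
        linarith [inner_le_suppFn hK'c hy θ]
    _ = ⟪x - y, θ⟫ := (inner_sub_left x y θ).symm
    _ ≤ dist x y * ‖θ‖ := dist_eq_norm x y ▸ real_inner_le_norm _ _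
    _ ≤ hausdorffDist K K' * ‖θ‖ := by gcongr

theorem abs_suppFn_sub_suppFn_le (hKc : IsCompact K) (hK'c : IsCompact K') (hK : K.Nonempty)
    (hK' : K'.Nonempty) (θ : EuclideanSpace ℝ (Fin d)) :
    |suppFn K θ - suppFn K' θ| ≤ hausdorffDist K K' * ‖θ‖ :=
  abs_sub_le_iff.2 ⟨suppFn_sub_suppFn_le hKc hK'c hK hK' θ,
    hausdorffDist_comm (s := K) ▸ suppFn_sub_suppFn_le hK'c hKc hK' hK θ⟩

end SupportFunction

section SphereMeasure

variable {d : ℕ}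

-- Unless `0 < μH[d - 1] (sphere 0 1) < ∞`, the junk value of `c⁻¹ •` makes `sphereMeasure d = 0`.
theorem sphereMeasure_eq_zero_or_isProbabilityMeasure (d : ℕ) :
    sphereMeasure d = 0 ∨ IsProbabilityMeasure (sphereMeasure d) := by
  set c := μH[(d : ℝ) - 1] (sphere (0 : EuclideanSpace ℝ (Fin d)) 1) with hc
  by_cases hc0 : c = 0
  · left
    rw [sphereMeasure, ← hc, Measure.restrict_eq_zero.2 hc0, smul_zero]
  by_cases hctop : c = ⊤
  · left
    rw [sphereMeasure, ← hc, hctop, ENNReal.inv_top, zero_smul]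
  · right
    constructor
    rw [sphereMeasure, ← hc, Measure.smul_apply, Measure.restrict_apply_univ, smul_eq_mul,
      ENNReal.inv_mul_cancel hc0 hctop]

instance isFiniteMeasure_sphereMeasure (d : ℕ) : IsFiniteMeasure (sphereMeasure d) :=
  (sphereMeasure_eq_zero_or_isProbabilityMeasure d).elim (fun h => h ▸ inferInstance)
    fun _ => inferInstance

theorem ae_norm_eq_one_sphereMeasure : ∀ᵐ θ ∂sphereMeasure d, ‖θ‖ = 1 :=
  (ae_restrict_mem isClosed_sphere.measurableSet).filter_mono
    (Measure.ae_smul_measure_le _) |>.mono fun _ h => mem_sphere_zero_iff_norm.1 h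

theorem Continuous.integrable_sphereMeasure {F : Type*} [NormedAddCommGroup F]
    {f : EuclideanSpace ℝ (Fin d) → F} (hf : Continuous f) : Integrable f (sphereMeasure d) := by
  obtain ⟨C, hC⟩ := (isCompact_sphere (0 : EuclideanSpace ℝ (Fin d)) 1).exists_bound_of_continuousOn
    hf.continuousOn
  exact Integrable.of_bound hf.aestronglyMeasurable C
    (ae_norm_eq_one_sphereMeasure.mono fun θ hθ => hC θ (mem_sphere_zero_iff_norm.2 hθ))

theorem LinearIsometryEquiv.measurePreserving_sphereMeasure
    (e : EuclideanSpace ℝ (Fin d) ≃ₗᵢ[ℝ] EuclideanSpace ℝ (Fin d)) :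
    MeasurePreserving e (sphereMeasure d) (sphereMeasure d) := by
  have h := (e.toIsometryEquiv.measurePreserving_hausdorffMeasure ((d : ℝ) - 1)).restrict_preimage
    (isClosed_sphere (x := (0 : EuclideanSpace ℝ (Fin d))) (ε := 1)).measurableSet
  have hpre : e.toIsometryEquiv ⁻¹' sphere 0 1 = sphere 0 1 := by
    ext θ
    simp
  rw [hpre] at h
  exact h.smul_measure _

theorem integral_inner_sq_sphereMeasure_eq_of_norm_eq {v w : EuclideanSpace ℝ (Fin d)}
    (h : ‖v‖ = ‖w‖) : ∫ θ, ⟪θ, v⟫ ^ 2 ∂sphereMeasure d = ∫ θ, ⟪θ, w⟫ ^ 2 ∂sphereMeasure d := by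
  set e := Submodule.reflection (ℝ ∙ (v - w))ᗮ
  have hev : e v = w := Submodule.reflection_sub h
  rw [← hev, ← e.measurePreserving_sphereMeasure.integral_comp e.toHomeomorph.measurableEmbedding
    (fun θ => ⟪θ, e v⟫ ^ 2)]
  simp_rw [e.inner_map_map]

theorem natCast_mul_integral_inner_sq_sphereMeasure (v : EuclideanSpace ℝ (Fin d)) :
    d * ∫ θ, ⟪θ, v⟫ ^ 2 ∂sphereMeasure d = ‖v‖ ^ 2 * (sphereMeasure d).real univ := by
  let b := EuclideanSpace.basisFun (Fin d) ℝ
  calc d * ∫ θ, ⟪θ, v⟫ ^ 2 ∂sphereMeasure d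
      = ∑ i, ∫ θ, ⟪θ, ‖v‖ • b i⟫ ^ 2 ∂sphereMeasure d := by
        have hnorm (i : Fin d) : ‖v‖ = ‖‖v‖ • b i‖ := by simp [norm_smul]
        simp [← integral_inner_sq_sphereMeasure_eq_of_norm_eq (hnorm _)]
    _ = ‖v‖ ^ 2 * ∫ θ, ∑ i, ⟪θ, b i⟫ ^ 2 ∂sphereMeasure d := by
        rw [integral_finsetSum _ fun i _ => (by fun_prop : Continuous _).integrable_sphereMeasure,
          Finset.mul_sum]
        simp_rw [inner_smul_right, mul_pow, integral_const_mul]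
    _ = ‖v‖ ^ 2 * ∫ θ, ‖θ‖ ^ 2 ∂sphereMeasure d := by simp_rw [b.sum_sq_inner_left]
    _ = ‖v‖ ^ 2 * (sphereMeasure d).real univ := by
        rw [integral_congr_ae (g := fun _ => (1 : ℝ))
          (ae_norm_eq_one_sphereMeasure.mono fun θ hθ => by simp [hθ]),
          integral_const, smul_eq_mul, mul_one]

theorem norm_natCast_smul_integral_smul_sphereMeasure_le
    {g : EuclideanSpace ℝ (Fin d) → ℝ} (hg : Continuous g) {δ : ℝ} (hδ : 0 ≤ δ)
    (hgδ : ∀ θ, ‖θ‖ = 1 → |g θ| ≤ δ) :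
    ‖(d : ℝ) • ∫ θ, g θ • θ ∂sphereMeasure d‖ ≤ √d * δ := by
  set v := ∫ θ, g θ • θ ∂sphereMeasure d
  rcases sphereMeasure_eq_zero_or_isProbabilityMeasure d with hσ | hσ
  · simp only [v, hσ, integral_zero_measure, smul_zero, norm_zero]
    positivity
  have hv : ‖v‖ ^ 2 = ∫ θ, g θ * ⟪θ, v⟫ ∂sphereMeasure d := by
    rw [← real_inner_self_eq_norm_sq,
      ← integral_inner (by fun_prop : Continuous fun θ => g θ • θ).integrable_sphereMeasure]
    simp_rw [real_inner_smul_right, real_inner_comm]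
  have hmoment : d * ∫ θ, ⟪θ, v⟫ ^ 2 ∂sphereMeasure d = ‖v‖ ^ 2 := by
    simpa using natCast_mul_integral_inner_sq_sphereMeasure v
  have hjensen : (‖v‖ ^ 2) ^ 2 ≤ δ ^ 2 * ∫ θ, ⟪θ, v⟫ ^ 2 ∂sphereMeasure d := calc
    (‖v‖ ^ 2) ^ 2 ≤ ∫ θ, (g θ * ⟪θ, v⟫) ^ 2 ∂sphereMeasure d :=
      hv ▸ sq_integral_le_integral_sq (by fun_prop : Continuous _).integrable_sphereMeasure
        (by fun_prop : Continuous _).integrable_sphereMeasure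
    _ ≤ ∫ θ, δ ^ 2 * ⟪θ, v⟫ ^ 2 ∂sphereMeasure d := by
      refine integral_mono_ae (by fun_prop : Continuous _).integrable_sphereMeasure
        (by fun_prop : Continuous _).integrable_sphereMeasure
        (ae_norm_eq_one_sphereMeasure.mono fun θ hθ => ?_)
      simp only [mul_pow]
      exact mul_le_mul_of_nonneg_right
        (sq_le_sq' (abs_le.1 (hgδ θ hθ)).1 (abs_le.1 (hgδ θ hθ)).2) (sq_nonneg _)
    _ = δ ^ 2 * ∫ θ, ⟪θ, v⟫ ^ 2 ∂sphereMeasure d := integral_const_mul _ _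
  have hvδ : d * ‖v‖ ^ 2 ≤ δ ^ 2 := by
    rcases (norm_nonneg v).eq_or_lt with hv0 | hv0
    · simp [← hv0, sq_nonneg]
    · refine le_of_mul_le_mul_left ?_ (pow_pos hv0 2)
      nlinarith
  rw [norm_smul, Real.norm_natCast]
  refine le_of_pow_le_pow_left₀ two_ne_zero (by positivity) ?_
  rw [mul_pow, mul_pow, Real.sq_sqrt (Nat.cast_nonneg d)]
  nlinarith [Nat.cast_nonneg (α := ℝ) d]

end SphereMeasure

theorem stmt_2_general {d : ℕ} (K K' : Set (EuclideanSpace ℝ (Fin d)))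
    (hK : K.Nonempty) (hK' : K'.Nonempty) (hKc : IsCompact K) (hK'c : IsCompact K') :
    ‖steinerPoint K - steinerPoint K'‖ ≤ Real.sqrt d * Metric.hausdorffDist K K' := by
  have hsub : steinerPoint K - steinerPoint K' =
      (d : ℝ) • ∫ θ, (suppFn K θ - suppFn K' θ) • θ ∂sphereMeasure d := by
    have hint : ∀ {L : Set (EuclideanSpace ℝ (Fin d))}, IsCompact L →
        Integrable (fun θ => suppFn L θ • θ) (sphereMeasure d) := fun hL =>
      ((continuous_suppFn hL).smul continuous_id).integrable_sphereMeasure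
    simp_rw [steinerPoint, ← smul_sub, sub_smul, integral_sub (hint hKc) (hint hK'c)]
  rw [hsub]
  refine norm_natCast_smul_integral_smul_sphereMeasure_le
    ((continuous_suppFn hKc).sub (continuous_suppFn hK'c)) hausdorffDist_nonneg fun θ hθ => ?_
  simpa [hθ] using abs_suppFn_sub_suppFn_le hKc hK'c hK hK' θ

/-- The Steiner point is `√d`-Lipschitz with respect to the Hausdorff distance:
`‖S(K) - S(K')‖₂ ≤ √d ⋅ δ_Haus(K, K')`. -/
theorem stmt_2 {d : ℕ} (K K' : Set (EuclideanSpace ℝ (Fin d)))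
    (hK : K.Nonempty) (hK' : K'.Nonempty) (hKc : IsCompact K) (hK'c : IsCompact K')
    (hKconv : Convex ℝ K) (hK'conv : Convex ℝ K') :
    ‖steinerPoint K - steinerPoint K'‖ ≤ Real.sqrt d * Metric.hausdorffDist K K' :=
  stmt_2_general K K' hK hK' hKc hK'c
end

section
/- Let X be a real random variable with density f that satisfies f(t) \ge L for all t in [Q_q(X) - r, Q_q(X) + r], where L, r > 0 and Q_q(X) is the q-quantile. Let Y be any real random variable with \sup_t |F_X(t) - F_Y(t)| \le \alpha_1 for some \alpha_1 with 2\alpha_1/L < r. Then |Q_q(X) - Q_q(Y)| \le 2\alpha_1/L. -/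
open MeasureTheory

/-- The CDF of a (law of a) real random variable. -/
noncomputable def rcdf (μ : Measure ℝ) (t : ℝ) : ℝ := (μ (Set.Iic t)).toReal

/-- The `q`-quantile `Q_q = inf {t : P(X ≤ t) ≥ q}`. -/
noncomputable def quantile (μ : Measure ℝ) (q : ℝ) : ℝ := sInf {t | q ≤ rcdf μ t}

open ProbabilityTheory Set Filter Topology

/-!
Let `Q = Q_q(X)` and `δ = 2α₁/L < r`. On `[Q - r, Q + r]` the CDF of `X` grows at rate at least
`L`, so moving a distance `δ` away from `Q` changes `F_X` by at least `Lδ = 2α₁`, which the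
perturbation `α₁` cannot undo: `F_Y(Q + δ) ≥ F_X(Q) + α₁ ≥ q`, while `F_Y(s) < q` for `s < Q - δ`.
Hence `Q - δ ≤ Q_q(Y) ≤ Q + δ`.
-/

lemma rcdf_eq_cdf (μ : Measure ℝ) [IsProbabilityMeasure μ] : rcdf μ = cdf μ :=
  funext fun x => (cdf_eq_real μ x).symm

lemma monotone_rcdf (μ : Measure ℝ) [IsProbabilityMeasure μ] : Monotone (rcdf μ) := by
  rw [rcdf_eq_cdf]
  exact monotone_cdf μ

section Quantile

variable (μ : Measure ℝ) [IsProbabilityMeasure μ] {q t : ℝ}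

lemma bddBelow_setOf_le_rcdf (hq : 0 < q) : BddBelow {t | q ≤ rcdf μ t} := by
  obtain ⟨t₀, ht₀⟩ := ((tendsto_cdf_atBot μ).eventually (eventually_lt_nhds hq)).exists
  refine ⟨t₀, fun s (hs : q ≤ rcdf μ s) => le_of_not_gt fun hst => ?_⟩
  rw [rcdf_eq_cdf] at hs
  exact (hs.trans (monotone_cdf μ hst.le)).not_gt ht₀

lemma nonempty_setOf_le_rcdf (hq : q < 1) : {t | q ≤ rcdf μ t}.Nonempty := by
  obtain ⟨t, ht⟩ := ((tendsto_cdf_atTop μ).eventually (eventually_gt_nhds hq)).exists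
  exact ⟨t, (congrFun (rcdf_eq_cdf μ) t).ge.trans' ht.le⟩

lemma quantile_le_of_le_rcdf (hq : 0 < q) (h : q ≤ rcdf μ t) : quantile μ q ≤ t :=
  csInf_le (bddBelow_setOf_le_rcdf μ hq) h

lemma le_quantile_of_forall_lt (hq : q < 1) (h : ∀ s < t, rcdf μ s < q) : t ≤ quantile μ q :=
  le_csInf (nonempty_setOf_le_rcdf μ hq) fun _ hs => le_of_not_gt fun hst => (h _ hst).not_ge hs

lemma rcdf_lt_of_lt_quantile (hq : 0 < q) (h : t < quantile μ q) : rcdf μ t < q :=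
  lt_of_not_ge fun hle => h.not_ge (quantile_le_of_le_rcdf μ hq hle)

lemma le_rcdf_quantile (hq : q ∈ Ioo 0 1) : q ≤ rcdf μ (quantile μ q) := by
  have hright : Tendsto (rcdf μ) (𝓝[>] (quantile μ q)) (𝓝 (rcdf μ (quantile μ q))) := by
    rw [rcdf_eq_cdf]
    exact ((cdf μ).right_continuous _).mono Ioi_subset_Ici_self
  refine ge_of_tendsto hright ?_
  filter_upwards [self_mem_nhdsWithin] with t ht
  obtain ⟨s, hs, hst⟩ := exists_lt_of_csInf_lt (nonempty_setOf_le_rcdf μ hq.2) ht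
  exact hs.trans (monotone_rcdf μ hst.le)

end Quantile

lemma mul_sub_le_rcdf_sub_of_le_density {f : ℝ → ℝ} {μ : Measure ℝ} [IsFiniteMeasure μ]
    (hμ : μ = volume.withDensity fun t => ENNReal.ofReal (f t)) {L a b : ℝ} (hL : 0 ≤ L)
    (hab : a ≤ b) (hf : ∀ t ∈ Ioc a b, L ≤ f t) : L * (b - a) ≤ rcdf μ b - rcdf μ a := by
  have hsplit : rcdf μ b - rcdf μ a = μ.real (Ioc a b) := by
    simp only [rcdf, ← measureReal_def]
    rw [← Iic_union_Ioc_eq_Iic hab, measureReal_union (Iic_disjoint_Ioc le_rfl) measurableSet_Ioc]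
    ring
  have hmass : ENNReal.ofReal (L * (b - a)) ≤ μ (Ioc a b) :=
    calc ENNReal.ofReal (L * (b - a)) = ∫⁻ _ in Ioc a b, ENNReal.ofReal L := by
          rw [setLIntegral_const, Real.volume_Ioc, ENNReal.ofReal_mul hL]
      _ ≤ ∫⁻ t in Ioc a b, ENNReal.ofReal (f t) :=
          setLIntegral_mono' measurableSet_Ioc fun t ht => ENNReal.ofReal_le_ofReal (hf t ht)
      _ = μ (Ioc a b) := by rw [hμ, withDensity_apply _ measurableSet_Ioc]
  rw [hsplit]
  exact (ENNReal.ofReal_le_iff_le_toReal (measure_ne_top μ _)).1 hmass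

theorem stmt_5_general (f : ℝ → ℝ) (μ ν : Measure ℝ) [IsProbabilityMeasure μ] [IsProbabilityMeasure ν]
    (hμ : μ = volume.withDensity fun t => ENNReal.ofReal (f t))
    (q L r α₁ : ℝ) (hq : q ∈ Set.Ioo (1 / 2 : ℝ) 1) (hL : 0 < L)
    (hdens : ∀ t, |t - quantile μ q| ≤ r → L ≤ f t)
    (hα : ∀ t, |rcdf μ t - rcdf ν t| ≤ α₁)
    (hsmall : 2 * α₁ / L < r) :
    |quantile μ q - quantile ν q| ≤ 2 * α₁ / L := by
  set Q := quantile μ q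
  set δ := 2 * α₁ / L
  have hq0 : q ∈ Ioo 0 1 := ⟨by linarith [hq.1], hq.2⟩
  have hLδ : L * δ = 2 * α₁ := mul_div_cancel₀ _ hL.ne'
  have hα₁ : 0 ≤ α₁ := (abs_nonneg _).trans (hα 0)
  have hδ : 0 ≤ δ := div_nonneg (by linarith) hL.le
  have hgrowth : ∀ a b, Q - r ≤ a → a ≤ b → b ≤ Q + r → L * (b - a) ≤ rcdf μ b - rcdf μ a :=
    fun a b ha hab hb => mul_sub_le_rcdf_sub_of_le_density hμ hL.le hab fun t ht =>
      hdens t (abs_le.2 ⟨by linarith [ht.1], by linarith [ht.2]⟩)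
  have hupper : quantile ν q ≤ Q + δ := by
    refine quantile_le_of_le_rcdf ν hq0.1 ?_
    have hrise := hgrowth Q (Q + δ) (by linarith) (by linarith) (by linarith)
    rw [add_sub_cancel_left, hLδ] at hrise
    have hQ : q ≤ rcdf μ Q := le_rcdf_quantile μ hq0
    linarith [(abs_le.1 (hα (Q + δ))).2]
  have hlower : Q - δ ≤ quantile ν q := by
    refine le_quantile_of_forall_lt ν hq0.2 fun s hs => ?_
    -- `s` may lie left of the window `[Q - r, Q + r]`; compare through `u ≥ s` inside it
    set u := max s (Q - r)
    have hu : u + δ < Q := by simp only [u, max_add, max_lt_iff]; constructor <;> linarith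
    have hrise := hgrowth u (u + δ) (le_max_right _ _) (by linarith) (by linarith)
    rw [add_sub_cancel_left, hLδ] at hrise
    have hsu : rcdf μ s ≤ rcdf μ u := monotone_rcdf μ (le_max_left _ _)
    linarith [rcdf_lt_of_lt_quantile μ hq0.1 hu, (abs_le.1 (hα s)).1]
  rw [abs_le]
  constructor <;> linarith

/-- If `X` has a density bounded below by `L` on `[Q_q(X) - r, Q_q(X) + r]` and
`sup_t |F_X(t) - F_Y(t)| ≤ α₁` with `2α₁/L < r`, then `|Q_q(X) - Q_q(Y)| ≤ 2α₁/L`. -/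
theorem stmt_5 (f : ℝ → ℝ) (μ ν : Measure ℝ) [IsProbabilityMeasure μ] [IsProbabilityMeasure ν]
    (hμ : μ = volume.withDensity fun t => ENNReal.ofReal (f t))
    (q L r α₁ : ℝ) (hq : q ∈ Set.Ioo (1 / 2 : ℝ) 1) (hL : 0 < L) (hr : 0 < r)
    (hdens : ∀ t, |t - quantile μ q| ≤ r → L ≤ f t)
    (hα : ∀ t, |rcdf μ t - rcdf ν t| ≤ α₁)
    (hsmall : 2 * α₁ / L < r) :
    |quantile μ q - quantile ν q| ≤ 2 * α₁ / L :=
  stmt_5_general f μ ν hμ q L r α₁ hq hL hdens hα hsmall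
end

section
/- Fix R > 0 and let K_1, K_2 \subseteq B(0,R) be convex bodies in R^d. Then for every x \in R^d, \|P_{K_1}(x) - P_{K_2}(x)\|_2 \le 2\sqrt{\|x\|_2 + R} \cdot \delta_{Haus}(K_1, K_2)^{1/2}, where P_K denotes the nearest-point projection onto K and \delta_{Haus} is the Hausdorff distance. -/
/-!
Write `pᵢ` for the projection of `x` onto `Kᵢ`. Expanding
`‖p₁ - p₂‖² = ⟪x - p₁, p₂ - p₁⟫ + ⟪x - p₂, p₁ - p₂⟫`, the variational inequality for the
projection onto the convex set `K₁` gives `⟪x - p₁, p₂ - p₁⟫ ≤ ⟪x - p₁, p₂ - q⟫` for every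
`q ∈ K₁`, hence `⟪x - p₁, p₂ - p₁⟫ ≤ ‖x - p₁‖ ⋅ d(p₂, K₁) ≤ (‖x‖ + R) ⋅ δ_Haus(K₁, K₂)`,
and symmetrically. So `‖p₁ - p₂‖² ≤ 2 (‖x‖ + R) δ_Haus(K₁, K₂)`.
-/

open InnerProductSpace Metric

section NearestPoint

variable {E : Type*} [NormedAddCommGroup E] [InnerProductSpace ℝ E] {K : Set E} {x p : E}

theorem real_inner_le_zero_of_forall_norm_sub_le (hK : Convex ℝ K) (hp : p ∈ K)
    (hmin : ∀ z ∈ K, ‖p - x‖ ≤ ‖z - x‖) {z : E} (hz : z ∈ K) :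
    ⟪x - p, z - p⟫_ℝ ≤ 0 := by
  have : Nonempty K := ⟨⟨p, hp⟩⟩
  have h_iInf : ‖x - p‖ = ⨅ w : K, ‖x - w‖ := by
    refine le_antisymm (le_ciInf fun w => ?_) ?_
    · simpa only [norm_sub_rev x] using hmin w w.2
    · exact ciInf_le (f := fun w : K => ‖x - w‖)
        ⟨0, Set.forall_mem_range.2 fun _ => norm_nonneg _⟩ ⟨p, hp⟩
  exact (norm_eq_iInf_iff_real_inner_le_zero hK hp).1 h_iInf z hz

theorem real_inner_le_norm_mul_infDist_of_forall_norm_sub_le (hK : Convex ℝ K) (hp : p ∈ K)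
    (hmin : ∀ z ∈ K, ‖p - x‖ ≤ ‖z - x‖) (y : E) :
    ⟪x - p, y - p⟫_ℝ ≤ ‖x - p‖ * infDist y K := by
  have h_dist (q : E) (hq : q ∈ K) : ⟪x - p, y - p⟫_ℝ ≤ ‖x - p‖ * dist y q := calc
    ⟪x - p, y - p⟫_ℝ = ⟪x - p, q - p⟫_ℝ + ⟪x - p, y - q⟫_ℝ := by
      rw [← inner_add_right, sub_add_sub_cancel']
    _ ≤ 0 + ‖x - p‖ * ‖y - q‖ := add_le_add
      (real_inner_le_zero_of_forall_norm_sub_le hK hp hmin hq) (real_inner_le_norm _ _)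
    _ = ‖x - p‖ * dist y q := by rw [zero_add, dist_eq_norm]
  rcases (norm_nonneg (x - p)).eq_or_lt with h_zero | h_pos
  · simpa [← h_zero] using h_dist p hp
  · rw [← div_le_iff₀' h_pos, le_infDist ⟨p, hp⟩]
    exact fun q hq => (div_le_iff₀' h_pos).2 (h_dist q hq)

theorem norm_sub_sq_le_of_forall_norm_sub_le {K₁ K₂ : Set E} (hK₁ : Convex ℝ K₁)
    (hK₂ : Convex ℝ K₂) {p₁ p₂ : E} (hp₁ : p₁ ∈ K₁) (hmin₁ : ∀ z ∈ K₁, ‖p₁ - x‖ ≤ ‖z - x‖)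
    (hp₂ : p₂ ∈ K₂) (hmin₂ : ∀ z ∈ K₂, ‖p₂ - x‖ ≤ ‖z - x‖) :
    ‖p₁ - p₂‖ ^ 2 ≤ ‖x - p₁‖ * infDist p₂ K₁ + ‖x - p₂‖ * infDist p₁ K₂ := calc
  ‖p₁ - p₂‖ ^ 2 = ⟪x - p₁, p₂ - p₁⟫_ℝ + ⟪x - p₂, p₁ - p₂⟫_ℝ := by
    rw [← neg_sub p₂ p₁, inner_neg_right, ← sub_eq_add_neg, ← inner_sub_left,
      sub_sub_sub_cancel_left, real_inner_self_eq_norm_sq, norm_neg, norm_sub_rev]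
  _ ≤ _ := add_le_add
    (real_inner_le_norm_mul_infDist_of_forall_norm_sub_le hK₁ hp₁ hmin₁ p₂)
    (real_inner_le_norm_mul_infDist_of_forall_norm_sub_le hK₂ hp₂ hmin₂ p₁)

end NearestPoint

theorem stmt_8_general {d : ℕ} (R : ℝ)
    (K₁ K₂ : Set (EuclideanSpace ℝ (Fin d)))
    (hv₁ : Convex ℝ K₁) (hv₂ : Convex ℝ K₂)
    (hb₁ : K₁ ⊆ Metric.closedBall 0 R) (hb₂ : K₂ ⊆ Metric.closedBall 0 R)
    (x p₁ p₂ : EuclideanSpace ℝ (Fin d))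
    (hp₁ : p₁ ∈ K₁ ∧ ∀ z ∈ K₁, ‖p₁ - x‖ ≤ ‖z - x‖)
    (hp₂ : p₂ ∈ K₂ ∧ ∀ z ∈ K₂, ‖p₂ - x‖ ≤ ‖z - x‖) :
    ‖p₁ - p₂‖ ≤ 2 * Real.sqrt (‖x‖ + R) * Real.sqrt (Metric.hausdorffDist K₁ K₂) := by
  obtain ⟨hp₁K, hmin₁⟩ := hp₁
  obtain ⟨hp₂K, hmin₂⟩ := hp₂
  set δ := hausdorffDist K₁ K₂
  have hfin : hausdorffEDist K₁ K₂ ≠ ⊤ :=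
    hausdorffEDist_ne_top_of_nonempty_of_bounded ⟨p₁, hp₁K⟩ ⟨p₂, hp₂K⟩
      (isBounded_closedBall.subset hb₁) (isBounded_closedBall.subset hb₂)
  have hδ₁ : infDist p₁ K₂ ≤ δ := infDist_le_hausdorffDist_of_mem hp₁K hfin
  have hδ₂ : infDist p₂ K₁ ≤ δ :=
    (infDist_le_hausdorffDist_of_mem hp₂K (by rwa [hausdorffEDist_comm])).trans_eq
      hausdorffDist_comm
  have h_norm (p) (hp : p ∈ closedBall 0 R) : ‖x - p‖ ≤ ‖x‖ + R :=
    (norm_sub_le x p).trans (add_le_add_right (mem_closedBall_zero_iff.1 hp) _)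
  have ha : 0 ≤ ‖x‖ + R := (norm_nonneg _).trans (h_norm p₁ (hb₁ hp₁K))
  have hδ : 0 ≤ δ := hausdorffDist_nonneg
  have h_sq : ‖p₁ - p₂‖ ^ 2 ≤ 2 * ((‖x‖ + R) * δ) := calc
    ‖p₁ - p₂‖ ^ 2 ≤ ‖x - p₁‖ * infDist p₂ K₁ + ‖x - p₂‖ * infDist p₁ K₂ :=
      norm_sub_sq_le_of_forall_norm_sub_le hv₁ hv₂ hp₁K hmin₁ hp₂K hmin₂
    _ ≤ (‖x‖ + R) * δ + (‖x‖ + R) * δ := by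
      gcongr
      exacts [infDist_nonneg, h_norm p₁ (hb₁ hp₁K), infDist_nonneg, h_norm p₂ (hb₂ hp₂K)]
    _ = 2 * ((‖x‖ + R) * δ) := by ring
  refine (pow_le_pow_iff_left₀ (norm_nonneg _) (by positivity) two_ne_zero).1 ?_
  rw [mul_pow, mul_pow, Real.sq_sqrt ha, Real.sq_sqrt hδ]
  nlinarith [mul_nonneg ha hδ]

/-- 1/2-Hölder stability of projections: for convex bodies `K₁, K₂ ⊆ B(0,R)` and any `x`,
`‖P_{K₁}(x) - P_{K₂}(x)‖ ≤ 2 √(‖x‖ + R) ⋅ δ_Haus(K₁,K₂)^{1/2}`. -/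
theorem stmt_8 {d : ℕ} (R : ℝ) (hR : 0 < R)
    (K₁ K₂ : Set (EuclideanSpace ℝ (Fin d)))
    (h₁ : K₁.Nonempty) (h₂ : K₂.Nonempty) (hc₁ : IsCompact K₁) (hc₂ : IsCompact K₂)
    (hv₁ : Convex ℝ K₁) (hv₂ : Convex ℝ K₂)
    (hb₁ : K₁ ⊆ Metric.closedBall 0 R) (hb₂ : K₂ ⊆ Metric.closedBall 0 R)
    (x p₁ p₂ : EuclideanSpace ℝ (Fin d))
    (hp₁ : p₁ ∈ K₁ ∧ ∀ z ∈ K₁, ‖p₁ - x‖ ≤ ‖z - x‖)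
    (hp₂ : p₂ ∈ K₂ ∧ ∀ z ∈ K₂, ‖p₂ - x‖ ≤ ‖z - x‖) :
    ‖p₁ - p₂‖ ≤ 2 * Real.sqrt (‖x‖ + R) * Real.sqrt (Metric.hausdorffDist K₁ K₂) :=
  stmt_8_general R K₁ K₂ hv₁ hv₂ hb₁ hb₂ x p₁ p₂ hp₁ hp₂
end
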